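/- If X ⊆ [ℕ]^∞ is κ-unbounded for κ ∈ {cf(𝔡), 𝔡}, and A ⊆ X is a κ-unbounded subset of cardinality κ, D ⊆ [ℕ]^∞ is a dominating set of cardinality 𝔡 partitioned as D = ⋃_{a∈A} I_a with |⋃_{a∈B} I_a| < 𝔡 for every B ⊆ A of cardinality < κ, and for each a ∈ A and d ∈ I_a a function d' ∈ [ℕ]^∞ is chosen with a ≤ d' and d ≤ d', then the set {a ⊎ d' : a ∈ A, d ∈ I_a} is a 𝔡-unbounded subset of [ℕ]^∞. -/

import Mathlib

/-!
If `a ≤ d'`, then at most `n` elements of `d'` lie below `a(n)`, so at most `2n` elements of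
`a ⊎ d'` lie below `2·a(n)` and `(a ⊎ d')(2n) ≥ 2·a(n)`. Hence if a family of such sets `a ⊎ d'` is
bounded by `b`, their left parts `a` are bounded by `n ↦ b(2n)`: they form fewer than `κ` elements
of `A`, the corresponding `d` lie in a union of fewer than `𝔡` of the sets `I a`, and the family has
fewer than `𝔡` members. Conversely the right parts `d' ≥ d` dominate because `D` does, so the family
has at least `𝔡` members.
-/

open Set Cardinal Filter

/-- The increasing enumeration of a set of naturals (meaningful when the set is infinite). -/
noncomputable def enum (a : Set ℕ) : ℕ → ℕ := Nat.nth (· ∈ a)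

/-- `a ⊎ b = {2k : k ∈ a} ∪ {2k+1 : k ∈ b}`. -/
def usum (a b : Set ℕ) : Set ℕ := (fun k => 2 * k) '' a ∪ (fun k => 2 * k + 1) '' b

def IsDominating (D : Set (ℕ → ℕ)) : Prop :=
  ∀ a : ℕ → ℕ, ∃ d ∈ D, ∀ᶠ n in Filter.atTop, a n ≤ d n

/-- The dominating number 𝔡. -/
noncomputable def dNum : Cardinal := sInf { c | ∃ D, IsDominating D ∧ c = #D }

open scoped Classical

lemma dNum_le_mk {T : Set (ℕ → ℕ)} (hT : IsDominating T) : dNum ≤ #T :=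
  csInf_le' ⟨T, hT, rfl⟩

lemma aleph0_le_dNum : ℵ₀ ≤ dNum := by
  refine le_csInf ⟨_, univ, fun g => ⟨g, mem_univ _, .of_forall fun _ => le_rfl⟩, rfl⟩ ?_
  rintro c ⟨T, hT, rfl⟩
  rw [← Cardinal.infinite_iff, infinite_coe_iff]
  intro hfin
  obtain ⟨d, hdT, hev⟩ := hT fun n => (hfin.toFinset.sup fun d => d n) + 1
  obtain ⟨n, hn⟩ := hev.exists
  exact Nat.not_succ_le_self _
    (hn.trans (Finset.le_sup (f := fun d => d n) (hfin.mem_toFinset.2 hdT)))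

lemma usum_infinite {a : Set ℕ} (x : Set ℕ) (ha : a.Infinite) : (usum a x).Infinite :=
  (ha.image fun _ _ _ _ h => by omega).mono subset_union_left

@[simp]
lemma two_mul_mem_usum {a x : Set ℕ} {k : ℕ} : 2 * k ∈ usum a x ↔ k ∈ a := by
  simp only [usum, mem_union, mem_image]
  constructor
  · rintro (⟨m, hm, h⟩ | ⟨m, -, h⟩)
    · rwa [show k = m by omega]
    · omega
  · exact fun h => .inl ⟨k, h, rfl⟩

@[simp]
lemma two_mul_add_one_mem_usum {a x : Set ℕ} {k : ℕ} : 2 * k + 1 ∈ usum a x ↔ k ∈ x := by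
  simp only [usum, mem_union, mem_image]
  constructor
  · rintro (⟨m, -, h⟩ | ⟨m, hm, h⟩)
    · omega
    · rwa [show k = m by omega]
  · exact fun h => .inr ⟨k, h, rfl⟩

lemma preimage_usum_odd (a x : Set ℕ) : (fun k => 2 * k + 1) ⁻¹' usum a x = x := by
  ext k
  exact two_mul_add_one_mem_usum

lemma count_usum_two_mul (a x : Set ℕ) (t : ℕ) :
    Nat.count (· ∈ usum a x) (2 * t) = Nat.count (· ∈ a) t + Nat.count (· ∈ x) t := by
  induction t with
  | zero => simp
  | succ t ih =>
    rw [show 2 * (t + 1) = 2 * t + 1 + 1 by ring, Nat.count_succ, Nat.count_succ, ih,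
      Nat.count_succ, Nat.count_succ]
    simp only [two_mul_mem_usum, two_mul_add_one_mem_usum]
    split_ifs <;> omega

lemma two_mul_enum_le_enum_usum {a x : Set ℕ} (ha : a.Infinite) (hx : x.Infinite)
    (hax : ∀ n, enum a n ≤ enum x n) (n : ℕ) : 2 * enum a n ≤ enum (usum a x) (2 * n) := by
  show _ ≤ Nat.nth (· ∈ usum a x) _
  rw [← Nat.count_le_iff_le_nth (p := (· ∈ usum a x)) (usum_infinite x ha), count_usum_two_mul]
  have hca : Nat.count (· ∈ a) (enum a n) = n := Nat.count_nth_of_infinite (p := (· ∈ a)) ha n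
  have hcx : Nat.count (· ∈ x) (enum a n) ≤ n :=
    (Nat.count_monotone _ (hax n)).trans (Nat.count_nth_of_infinite (p := (· ∈ x)) hx n).le
  omega

lemma enum_strictMono {b : Set ℕ} (hb : b.Infinite) : StrictMono (enum b) :=
  Nat.nth_strictMono hb

lemma le_enum_range {g : ℕ → ℕ} (hg : StrictMono g) (n : ℕ) : g n ≤ enum (range g) n := by
  have hinf : ∀ hf : (range g).Finite, False := infinite_range_of_injective hg.injective
  refine Nat.le_nth_of_monotoneOn_of_surjOn g ?_ (hg.monotone.monotoneOn _)
    fun hf => (hinf hf).elim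
  rintro _ ⟨k, rfl⟩
  exact ⟨k, fun hf => (hinf hf).elim, rfl⟩

lemma enum_le_enum_range_two_mul {a x b : Set ℕ} (ha : a.Infinite) (hx : x.Infinite)
    (hb : b.Infinite) (hax : ∀ n, enum a n ≤ enum x n)
    (hab : ∀ n, enum (usum a x) n ≤ enum b n) (n : ℕ) :
    enum a n ≤ enum (range fun n => enum b (2 * n)) n := by
  have h₁ := two_mul_enum_le_enum_usum ha hx hax n
  have h₂ := le_enum_range (fun m n h => enum_strictMono hb (by omega : 2 * m < 2 * n)) n
  have := hab (2 * n)
  omega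

theorem stmt6_general (κ : Cardinal) (hκ : κ = (Cardinal.ord dNum).cof ∨ κ = dNum)
    (A : Set (Set ℕ)) (hA : ∀ a ∈ A, a.Infinite)
    (hAunb : ∀ Y ⊆ A, (∃ b : Set ℕ, b.Infinite ∧ ∀ y ∈ Y, ∀ n, enum y n ≤ enum b n) → #Y < κ)
    (D : Set (Set ℕ))
    (hDdom : ∀ g : ℕ → ℕ, ∃ d ∈ D, ∀ᶠ n in Filter.atTop, g n ≤ enum d n)
    (I : Set ℕ → Set (Set ℕ)) (hIcover : D = ⋃ a ∈ A, I a)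
    (hIsmall : ∀ B ⊆ A, #B < κ → #(⋃ a ∈ B, I a) < dNum)
    (f : Set ℕ → Set ℕ → Set ℕ)
    (hf : ∀ a ∈ A, ∀ d ∈ I a, (f a d).Infinite ∧ (∀ n, enum a n ≤ enum (f a d) n) ∧
      (∀ n, enum d n ≤ enum (f a d) n)) :
    (∀ s ∈ {s : Set ℕ | ∃ a ∈ A, ∃ d ∈ I a, s = usum a (f a d)}, s.Infinite) ∧
    dNum ≤ #{s : Set ℕ | ∃ a ∈ A, ∃ d ∈ I a, s = usum a (f a d)} ∧
    ∀ Y ⊆ {s : Set ℕ | ∃ a ∈ A, ∃ d ∈ I a, s = usum a (f a d)},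
      (∃ b : Set ℕ, b.Infinite ∧ ∀ y ∈ Y, ∀ n, enum y n ≤ enum b n) → #Y < dNum := by
  refine ⟨?_, ?_, ?_⟩
  · rintro s ⟨a, ha, d, -, rfl⟩
    exact usum_infinite _ (hA a ha)
  · refine (dNum_le_mk (T := (fun s => enum ((fun k => 2 * k + 1) ⁻¹' s)) '' _) ?_).trans
      mk_image_le
    intro g
    obtain ⟨d, hdD, hev⟩ := hDdom g
    obtain ⟨a, ha, hd⟩ := mem_iUnion₂.1 (hIcover ▸ hdD)
    refine ⟨_, ⟨_, ⟨a, ha, d, hd, rfl⟩, rfl⟩, ?_⟩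
    simpa only [preimage_usum_odd] using hev.mono fun n hn => hn.trans ((hf a ha d hd).2.2 n)
  · rintro Y hY ⟨b, hb, hbY⟩
    set B := {a ∈ A | ∃ d ∈ I a, usum a (f a d) ∈ Y}
    have hbound : ∀ a ∈ B, ∀ n, enum a n ≤ enum (range fun n => enum b (2 * n)) n := by
      rintro a ⟨ha, d, hd, hy⟩
      exact enum_le_enum_range_two_mul (hA a ha) (hf a ha d hd).1 hb (hf a ha d hd).2.1 (hbY _ hy)
    have hBκ : #B < κ := hAunb B (sep_subset _ _)
      ⟨_, infinite_range_of_injective ((enum_strictMono hb).injective.comp fun _ _ h => by omega),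
        hbound⟩
    have hYsub : Y ⊆ image2 (fun a d => usum a (f a d)) B (⋃ a ∈ B, I a) := by
      intro y hy
      obtain ⟨a, ha, d, hd, rfl⟩ := hY hy
      exact ⟨a, ⟨ha, d, hd, hy⟩, d, mem_iUnion₂.2 ⟨a, ⟨ha, d, hd, hy⟩, hd⟩, rfl⟩
    have hκd : κ ≤ dNum := hκ.elim (fun h => h ▸ Ordinal.cof_ord_le dNum) le_of_eq
    calc #Y ≤ #B * #(⋃ a ∈ B, I a) := (mk_le_mk_of_subset hYsub).trans mk_image2_le
      _ < dNum := mul_lt_of_lt aleph0_le_dNum (hBκ.trans_le hκd) (hIsmall B (sep_subset _ _) hBκ)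

theorem stmt6 (κ : Cardinal) (hκ : κ = (Cardinal.ord dNum).cof ∨ κ = dNum)
    (A : Set (Set ℕ)) (hA : ∀ a ∈ A, a.Infinite) (hAcard : #A = κ)
    (hAunb : ∀ Y ⊆ A, (∃ b : Set ℕ, b.Infinite ∧ ∀ y ∈ Y, ∀ n, enum y n ≤ enum b n) → #Y < κ)
    (D : Set (Set ℕ)) (hD : ∀ d ∈ D, d.Infinite) (hDcard : #D = dNum)
    (hDdom : ∀ g : ℕ → ℕ, ∃ d ∈ D, ∀ᶠ n in Filter.atTop, g n ≤ enum d n)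
    (I : Set ℕ → Set (Set ℕ)) (hIcover : D = ⋃ a ∈ A, I a)
    (hIsmall : ∀ B ⊆ A, #B < κ → #(⋃ a ∈ B, I a) < dNum)
    (f : Set ℕ → Set ℕ → Set ℕ)
    (hf : ∀ a ∈ A, ∀ d ∈ I a, (f a d).Infinite ∧ (∀ n, enum a n ≤ enum (f a d) n) ∧
      (∀ n, enum d n ≤ enum (f a d) n)) :
    (∀ s ∈ {s : Set ℕ | ∃ a ∈ A, ∃ d ∈ I a, s = usum a (f a d)}, s.Infinite) ∧
    dNum ≤ #{s : Set ℕ | ∃ a ∈ A, ∃ d ∈ I a, s = usum a (f a d)} ∧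
    ∀ Y ⊆ {s : Set ℕ | ∃ a ∈ A, ∃ d ∈ I a, s = usum a (f a d)},
      (∃ b : Set ℕ, b.Infinite ∧ ∀ y ∈ Y, ∀ n, enum y n ≤ enum b n) → #Y < dNum :=
  stmt6_general κ hκ A hA hAunb D hDdom I hIcover hIsmall f hf
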